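/- Exactness at the last step of the discrete cuboid complex at the polynomial level: div div Σ_{[k]}(D;S) = Q_{k-2}(D;ℝ), where Σ_{[k]}(D;S) is the space of symmetric 3×3 polynomial matrices with diagonal entries σ_ii ∈ P with degrees (k, k−2, k−2) cyclically arranged so that σ_ii has degree ≤ k in x_i and ≤ k−2 in the other variables, and off-diagonal σ_ij (i≠j, with third index l) of degree ≤ k−1 in x_i and x_j and ≤ k−2 in x_l. -/

import Mathlib

open MvPolynomial

noncomputable section

abbrev P3 : Type := MvPolynomial (Fin 3) ℝ

/-- `Qb m q` : `q` has degree at most `m` in each of the three variables. -/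
def Qb (m : ℕ) (q : P3) : Prop := ∀ i, q.degreeOf i ≤ m

/-- Membership in `M_{[k-1]} = P_{k-2,k-1,k-1} × P_{k-1,k-2,k-1} × P_{k-1,k-1,k-2}`. -/
def Mb (k : ℕ) (u : Fin 3 → P3) : Prop :=
  ∀ i j, (u i).degreeOf j ≤ if j = i then k - 2 else k - 1

/-- Membership in `V_{[k-1]} = P_{k-1,k-2,k-2} × P_{k-2,k-1,k-2} × P_{k-2,k-2,k-1}`. -/
def Vb (k : ℕ) (v : Fin 3 → P3) : Prop :=
  ∀ i j, (v i).degreeOf j ≤ if j = i then k - 1 else k - 2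

/-- Gradient of a polynomial. -/
def gradP (q : P3) : Fin 3 → P3 := fun i => pderiv i q

/-- Curl of a polynomial vector field. -/
def curlP (w : Fin 3 → P3) : Fin 3 → P3 :=
  ![pderiv 1 (w 2) - pderiv 2 (w 1),
    pderiv 2 (w 0) - pderiv 0 (w 2),
    pderiv 0 (w 1) - pderiv 1 (w 0)]

/-- Divergence of a polynomial vector field. -/
def divP (v : Fin 3 → P3) : P3 := ∑ i, pderiv i (v i)

/-- Membership in the cuboid shape space `Σ_{[k]}(D;𝕊)`: symmetric, with
`σ_ii` of degree `≤ k` in `x_i` and `≤ k−2` in the other variables, and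
`σ_ij` (`i ≠ j`, third index `l`) of degree `≤ k−1` in `x_i, x_j` and `≤ k−2` in `x_l`. -/
def Sb (k : ℕ) (σ : Fin 3 → Fin 3 → P3) : Prop :=
  (∀ i j, σ i j = σ j i) ∧
  (∀ i j, j ≠ i → (σ i i).degreeOf i ≤ k ∧ (σ i i).degreeOf j ≤ k - 2) ∧
  (∀ i j l : Fin 3, i ≠ j → j ≠ l → i ≠ l →
    (σ i j).degreeOf i ≤ k - 1 ∧ (σ i j).degreeOf j ≤ k - 1 ∧ (σ i j).degreeOf l ≤ k - 2)

/-- `div div` of a polynomial matrix field. -/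
def divdivP (σ : Fin 3 → Fin 3 → P3) : P3 := ∑ i, ∑ j, pderiv i (pderiv j (σ i j))

lemma degreeOf_monomial_le {σ : Type*} [DecidableEq σ] (s : σ →₀ ℕ) (i : σ) (a : ℝ) :
    (monomial s a : MvPolynomial σ ℝ).degreeOf i ≤ s i := by
  by_cases h : a = 0
  · simp [h]
  · rw [degreeOf_monomial_eq s i h]

lemma degreeOf_pderiv_le (i j : Fin 3) (p : P3) :
    (pderiv i p).degreeOf j ≤ p.degreeOf j - (if i = j then 1 else 0) := by
  conv_lhs => rw [p.as_sum, map_sum]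
  refine (degreeOf_sum_le _ _ _).trans (Finset.sup_le fun m hm => ?_)
  rw [pderiv_monomial]
  refine (degreeOf_monomial_le _ _ _).trans ?_
  rw [Finsupp.tsub_apply]
  refine le_trans ?_ (Nat.sub_le_sub_right (monomial_le_degreeOf j hm) _)
  rcases eq_or_ne i j with rfl | h
  · simp
  · simp [Finsupp.single_apply, h]

/-- Double antiderivative in `x₀`. -/
noncomputable def antiD (p : P3) : P3 :=
  ∑ m ∈ p.support, monomial (m + Finsupp.single 0 2)
    (p.coeff m / ((m 0 + 1) * (m 0 + 2) : ℝ))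

lemma pderiv_pderiv_antiD (p : P3) : pderiv 0 (pderiv 0 (antiD p)) = p := by
  unfold antiD
  rw [map_sum, map_sum]
  conv_rhs => rw [p.as_sum]
  refine Finset.sum_congr rfl fun m hm => ?_
  rw [pderiv_monomial, pderiv_monomial]
  have h1 : (m + Finsupp.single 0 2) - Finsupp.single 0 1 = m + Finsupp.single 0 1 := by
    ext j
    by_cases h : j = (0 : Fin 3)
    · subst h; simp [Finsupp.tsub_apply, Finsupp.single_apply]
    · simp [Finsupp.tsub_apply, Finsupp.single_apply, Ne.symm h]
  have h2 : (m + Finsupp.single 0 1) - Finsupp.single 0 1 = m := by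
    ext j
    by_cases h : j = (0 : Fin 3)
    · subst h; simp [Finsupp.tsub_apply, Finsupp.single_apply]
    · simp [Finsupp.tsub_apply, Finsupp.single_apply, Ne.symm h]
  rw [h1, h2]
  congr 1
  have e1 : ((m + Finsupp.single 0 2 : Fin 3 →₀ ℕ)) 0 = m 0 + 2 := by
    simp [Finsupp.add_apply, Finsupp.single_apply]
  have e2 : ((m + Finsupp.single 0 1 : Fin 3 →₀ ℕ)) 0 = m 0 + 1 := by
    simp [Finsupp.add_apply, Finsupp.single_apply]
  rw [e1, e2]
  push_cast
  have h3 : ((m 0 : ℝ) + 1) ≠ 0 := by positivity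
  have h4 : ((m 0 : ℝ) + 2) ≠ 0 := by positivity
  field_simp

lemma degreeOf_antiD_le (p : P3) (j : Fin 3) :
    (antiD p).degreeOf j ≤ p.degreeOf j + (if j = 0 then 2 else 0) := by
  unfold antiD
  refine (degreeOf_sum_le _ _ _).trans (Finset.sup_le fun m hm => ?_)
  refine (degreeOf_monomial_le _ _ _).trans ?_
  rw [Finsupp.add_apply]
  refine add_le_add (monomial_le_degreeOf j hm) ?_
  by_cases h : j = (0 : Fin 3)
  · subst h; simp [Finsupp.single_apply]
  · simp [Finsupp.single_apply, Ne.symm h]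

/-- `div div Σ_{[k]}(D;𝕊) = Q_{k-2}(D;ℝ)`. -/
theorem divdiv_Sigma_eq_Q (k : ℕ) (hk : 2 ≤ k) :
    (∀ σ : Fin 3 → Fin 3 → P3, Sb k σ → Qb (k - 2) (divdivP σ)) ∧
    (∀ p : P3, Qb (k - 2) p → ∃ σ : Fin 3 → Fin 3 → P3, Sb k σ ∧ divdivP σ = p) := by
  have third : ∀ i j : Fin 3, ∃ l, l ≠ i ∧ l ≠ j := by decide
  constructor
  · rintro σ ⟨hsym, hdiag, hoff⟩ m
    unfold divdivP
    refine (degreeOf_sum_le _ _ _).trans (Finset.sup_le fun i _ => ?_)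
    refine (degreeOf_sum_le _ _ _).trans (Finset.sup_le fun j _ => ?_)
    have h1 := degreeOf_pderiv_le i m (pderiv j (σ i j))
    have h2 := degreeOf_pderiv_le j m (σ i j)
    rcases eq_or_ne i j with rfl | hij
    · rcases eq_or_ne i m with rfl | him
      · simp at h1 h2
        obtain ⟨j', hj'⟩ := exists_ne i
        have := (hdiag i j' hj').1
        omega
      · simp [him] at h1 h2
        have := (hdiag i m (Ne.symm him)).2
        omega
    · rcases eq_or_ne m i with rfl | hmi
      · simp [Ne.symm hij] at h1 h2
        obtain ⟨l, hl⟩ := third m j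
        have := (hoff m j l hij (Ne.symm hl.2) (Ne.symm hl.1)).1
        omega
      · rcases eq_or_ne m j with rfl | hmj
        · simp [hij] at h1 h2
          obtain ⟨l, hl⟩ := third i m
          have := (hoff i m l hij (Ne.symm hl.2) (Ne.symm hl.1)).2.1
          omega
        · simp [Ne.symm hmi, Ne.symm hmj] at h1 h2
          have := (hoff i j m hij (Ne.symm hmj) (Ne.symm hmi)).2.2
          omega
  · intro p hp
    set σ : Fin 3 → Fin 3 → P3 := fun i j => if i = 0 ∧ j = 0 then antiD p else 0 with hσ
    have e00 : σ 0 0 = antiD p := if_pos ⟨rfl, rfl⟩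
    have ez : ∀ i j : Fin 3, ¬(i = 0 ∧ j = 0) → σ i j = 0 := fun i j h => if_neg h
    refine ⟨σ, ⟨?_, ?_, ?_⟩, ?_⟩
    · intro i j
      by_cases h : i = 0 <;> by_cases h' : j = 0 <;> simp [hσ, h, h']
    · intro i j hj
      by_cases hi : i = 0
      · subst hi
        rw [e00]
        have h := degreeOf_antiD_le p 0
        have h2 := degreeOf_antiD_le p j
        have h0 := hp 0
        have hpj := hp j
        rw [if_pos rfl] at h
        rw [if_neg hj] at h2
        exact ⟨by omega, by omega⟩
      · rw [ez i i (fun h => hi h.1)]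
        simp
    · intro i j l hij hjl hil
      rw [ez i j (fun h => hij (h.1.trans h.2.symm))]
      simp
    · unfold divdivP
      simp only [Fin.sum_univ_three, e00,
        ez 0 1 (by decide), ez 0 2 (by decide), ez 1 0 (by decide), ez 1 1 (by decide),
        ez 1 2 (by decide), ez 2 0 (by decide), ez 2 1 (by decide), ez 2 2 (by decide),
        map_zero, add_zero, zero_add]
      exact pderiv_pderiv_antiD p


end
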